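/- The conjunction of statements (A) and (B) is equivalent to statement (**). -/

import Mathlib

noncomputable section

abbrev Ordi : Type 1 := Ordinal.{0}

/-- The ordinal `ω₁`. -/
def w1 : Ordi := (Cardinal.aleph 1).ord

/-- The ordinal `ω₂`. -/
def w2 : Ordi := (Cardinal.aleph 2).ord

/-- `C` is a club (closed and unbounded) subset of `κ`. -/
def IsClubIn (C : Set Ordi) (κ : Ordi) : Prop :=
  C ⊆ Set.Iio κ ∧ (∀ α < κ, ∃ β ∈ C, α ≤ β) ∧
    ∀ α, 0 < α → α < κ → (∀ β < α, ∃ γ ∈ C, β < γ ∧ γ < α) → α ∈ C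

/-- `S` is a stationary subset of `κ`: it meets every club subset of `κ`. -/
def IsStationaryIn (S : Set Ordi) (κ : Ordi) : Prop :=
  S ⊆ Set.Iio κ ∧ ∀ C : Set Ordi, IsClubIn C κ → (S ∩ C).Nonempty

/-- `S²₁`: the set of ordinals below `ω₂` of cofinality `ω₁`. -/
def S21 : Set Ordi := {α | α < w2 ∧ Ordinal.cof α = Cardinal.aleph 1}

/-- Statement (A): any family of at most `ω₂`-many club subsets of `ω₁` can be
diagonalized. -/
def StatementA : Prop :=
  ∀ 𝒞 : Set (Set Ordi), (∀ C ∈ 𝒞, IsClubIn C w1) →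
    Cardinal.mk ↥𝒞 ≤ Cardinal.aleph 2 →
    ∃ E : Set Ordi, IsClubIn E w1 ∧ ∀ C ∈ 𝒞, (E \ C).Countable

/-- Statement (B): there is a sequence `⟨π_β : ω₁ ≤ β < ω₂⟩` of bijections
`π_β : β → ω₁` such that for every `g : ω₁ → ω₁` there are an injective
`h : ω₂ → ω₂` and a stationary set `I ⊆ S²₁` of ordinals closed under `h`
with the stated oscillation properties. -/
def StatementB : Prop :=
  ∃ pi : Ordi → Ordi → Ordi,
    (∀ β, w1 ≤ β → β < w2 → Set.BijOn (pi β) (Set.Iio β) (Set.Iio w1)) ∧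
    ∀ g : Ordi → Ordi, (∀ i < w1, g i < w1) →
      ∃ h : Ordi → Ordi, Set.InjOn h (Set.Iio w2) ∧ (∀ α < w2, h α < w2) ∧
        ∃ I : Set Ordi, I ⊆ S21 ∧ IsStationaryIn I w2 ∧
          (∀ β ∈ I, ∀ α < β, h α < β) ∧
          ∀ β ∈ I, ∃ D : Set Ordi, D ⊆ Set.Iio β ∧ D.Countable ∧
            (∀ α < β, α ∉ D →
              g (min (pi β α) (pi β (h α))) < max (pi β α) (pi β (h α))) ∧
            (∀ α < β, α ∉ D → ∀ γ < β, γ ∉ D → α ≠ γ →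
              g (min (pi β (h α)) (pi β (h γ))) < max (pi β (h α)) (pi β (h γ)))

/-- Statement (**): for any family `F` of at most `ω₂`-many injective functions
from `ω₂` to `ω₂` there is an injective `h : ω₂ → ω₂` such that for every
`f ∈ F` there is a countable `D ⊆ ω₂` with `f(α) ≠ h(α)` off `D` and
`f(h(α)) ≠ h(β)` for distinct `α, β` off `D`. -/
def StatementSS : Prop :=
  ∀ F : Set (Ordi → Ordi),
    (∀ f ∈ F, Set.InjOn f (Set.Iio w2) ∧ ∀ α < w2, f α < w2) →
    Cardinal.mk ↥F ≤ Cardinal.aleph 2 →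
    ∃ h : Ordi → Ordi, Set.InjOn h (Set.Iio w2) ∧ (∀ α < w2, h α < w2) ∧
      ∀ f ∈ F, ∃ D : Set Ordi, D ⊆ Set.Iio w2 ∧ D.Countable ∧
        (∀ α < w2, α ∉ D → f α ≠ h α) ∧
        (∀ α < w2, α ∉ D → ∀ β < w2, β ∉ D → α ≠ β → f (h α) ≠ h β)

/-!
Both directions rest on catching pairs of countable ordinals by injections of `ω₂`. For
`g : ω₁ → ω₁`, the pairs `{x, y}` with `max x y ≤ g (min x y)` form a relation with countable
sections, hence a countable union of partial injections. Transported to `β ∈ [ω₁, ω₂)` along a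
bijection `β ≃ ω₁` and extended by `α ↦ β + α`, they give `ω₂`-many injections of `ω₂`, and an `h`
as in (**) for all of them avoids these pairs at every `β`, off a countable set. This is (B), with
`I` the points of cofinality `ω₁` closed under `h`. It also gives (A), taking for `g` the
next-element functions of the clubs and for `E` the accumulation points of
`{π_β (h α) | α < β}` for one `β` closed under `h`.

Conversely, for an injective `f`, the countable ordinals closed under the graph of `f`
transported to `ω₁` by `π_β` form a club. Diagonalising these clubs by (A) gives `E`, and (B)
for `g` the next-element function of `E` gives `h`: at `β ∈ I`, a pair `(a, f a)` with large
`π_β`-values satisfies `max ≤ g (min)`, so by (B) `f α ≠ h α` and `f (h α) ≠ h γ` off a countable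
set below `β`. Since `I` is unbounded in `ω₂`, an uncountable exceptional set would already be
caught below some `β ∈ I`.
-/

namespace OmegaTwo

open Cardinal Ordinal Order Set

lemma aleph_two_eq_succ : (ℵ_ 2 : Cardinal.{0}) = succ ℵ₁ := by
  rw [succ_aleph, one_add_one_eq_two]

lemma isRegular_aleph_two : (ℵ_ 2 : Cardinal.{0}).IsRegular := by
  rw [aleph_two_eq_succ]; exact isRegular_succ (aleph0_le_aleph 1)

lemma aleph0_lt_aleph_two : (ℵ₀ : Cardinal.{0}) < ℵ_ 2 :=
  aleph0_lt_aleph_one.trans (aleph_lt_aleph.2 one_lt_two)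

lemma w1_lt_w2 : w1 < w2 := ord_lt_ord.2 (aleph_lt_aleph.2 one_lt_two)

lemma isSuccLimit_w1 : IsSuccLimit w1 := isSuccLimit_ord (aleph0_le_aleph 1)

lemma isSuccLimit_w2 : IsSuccLimit w2 := isSuccLimit_ord (aleph0_le_aleph 2)

lemma w1_le_of_mem_S21 {β : Ordi} (hβ : β ∈ S21) : w1 ≤ β :=
  ord_le.2 (hβ.2 ▸ cof_le_card β)

lemma countable_Iio_iff {β : Ordi} : (Iio β).Countable ↔ β < w1 := by
  rw [← le_aleph0_iff_set_countable, Cardinal.mk_Iio_ordinal, lift_le_aleph0, w1, lt_ord,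
    lt_aleph_one_iff]

lemma countable_Iic {x : Ordi} (hx : x < w1) : (Iic x).Countable :=
  (countable_Iio_iff.2 (isSuccLimit_w1.succ_lt hx)).mono (Iic_subset_Iio.2 (lt_succ x))

lemma exists_gt_of_not_countable {S : Set Ordi} (hS : ¬ S.Countable) {x : Ordi} (hx : x < w1) :
    ∃ s ∈ S, x < s := by
  by_contra! h
  exact hS ((countable_Iic hx).mono h)

lemma mk_Iio_w2 : #(Iio w2) = ℵ_ 2 := by
  rw [Cardinal.mk_Iio_ordinal, w2, card_ord, lift_aleph]; simp

lemma mk_Ico_w1_w2_le : #(Ico w1 w2) ≤ ℵ_ 2 :=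
  mk_Iio_w2 ▸ mk_le_mk_of_subset Ico_subset_Iio_self

lemma mul_le_aleph_two {a b : Cardinal.{1}} (ha : a ≤ ℵ_ 2) (hb : b ≤ ℵ_ 2) : a * b ≤ ℵ_ 2 :=
  (mul_le_mul' ha hb).trans (mul_eq_self (aleph0_le_aleph 2)).le

lemma exists_bijOn_Iio_w1 {β : Ordi} (h1 : w1 ≤ β) (h2 : β < w2) :
    ∃ p : Ordi → Ordi, BijOn p (Iio β) (Iio w1) := by
  have hcard : β.card = ℵ₁ :=
    le_antisymm (lt_succ_iff.1 (aleph_two_eq_succ ▸ lt_ord.1 h2)) (ord_le.1 h1)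
  obtain ⟨e⟩ : Nonempty (Iio β ≃ Iio w1) := by
    rw [← Cardinal.eq, Cardinal.mk_Iio_ordinal, Cardinal.mk_Iio_ordinal, hcard, w1, card_ord]
  classical
  refine ⟨fun x => if hx : x < β then e ⟨x, hx⟩ else 0, fun x hx => ?_,
    fun x hx y hy hxy => ?_, fun y hy => ⟨e.symm ⟨y, hy⟩, (e.symm ⟨y, hy⟩).2, ?_⟩⟩
  · simp only [mem_Iio.1 hx, dite_true]; exact (e _).2
  · simp only [mem_Iio.1 hx, mem_Iio.1 hy, dite_true, Subtype.coe_inj, e.apply_eq_iff_eq] at hxy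
    exact congrArg Subtype.val hxy
  · exact (dif_pos (e.symm ⟨y, hy⟩).2).trans (by simp)

def collapse (β : Ordi) : Ordi → Ordi :=
  if h : w1 ≤ β ∧ β < w2 then (exists_bijOn_Iio_w1 h.1 h.2).choose else id

lemma collapse_bijOn {β : Ordi} (h1 : w1 ≤ β) (h2 : β < w2) :
    BijOn (collapse β) (Iio β) (Iio w1) := by
  rw [collapse, dif_pos ⟨h1, h2⟩]; exact (exists_bijOn_Iio_w1 h1 h2).choose_spec

def nextIn {α : Type*} [ConditionallyCompleteLinearOrder α] (S : Set α) (x : α) : α :=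
  sInf {s ∈ S | x < s}

lemma nextIn_mem {α : Type*} [ConditionallyCompleteLinearOrder α] [WellFoundedLT α] {S : Set α}
    {x : α} (h : ∃ s ∈ S, x < s) : nextIn S x ∈ S ∧ x < nextIn S x :=
  csInf_mem h

section Club

variable {C : Set Ordi} {κ : Ordi}

lemma _root_.IsClubIn.exists_gt (hC : IsClubIn C κ) (hκ : IsSuccLimit κ) {x : Ordi}
    (hx : x < κ) : ∃ y ∈ C, x < y :=
  let ⟨y, hy, hle⟩ := hC.2.1 (succ x) (hκ.succ_lt hx)
  ⟨y, hy, (lt_succ x).trans_le hle⟩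

lemma _root_.IsClubIn.nextIn_lt (hC : IsClubIn C κ) (hκ : IsSuccLimit κ) {x : Ordi}
    (hx : x < κ) : nextIn C x < κ :=
  hC.1 (nextIn_mem (hC.exists_gt hκ hx)).1

lemma _root_.IsClubIn.mem_of_forall_nextIn_lt (hC : IsClubIn C κ) (hκ : IsSuccLimit κ) {δ : Ordi}
    (hδ : δ < κ) (h0 : 0 < δ) (h : ∀ x < δ, nextIn C x < δ) : δ ∈ C :=
  hC.2.2 δ h0 hδ fun x hx =>
    let hn := nextIn_mem (hC.exists_gt hκ (hx.trans hδ))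
    ⟨_, hn.1, hn.2, h x hx⟩

lemma isClubIn_Ioo (hκ : IsSuccLimit κ) {x : Ordi} (hx : x < κ) : IsClubIn (Ioo x κ) κ :=
  ⟨fun _ h => h.2, fun α hα => ⟨max α (succ x), ⟨(lt_succ x).trans_le (le_max_right _ _),
    max_lt hα (hκ.succ_lt hx)⟩, le_max_left _ _⟩,
    fun _ h0 hδ hcl => let ⟨_, hγ, _, hγδ⟩ := hcl 0 h0; ⟨hγ.1.trans hγδ, hδ⟩⟩

lemma _root_.IsStationaryIn.exists_gt {I : Set Ordi} (hI : IsStationaryIn I κ)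
    (hκ : IsSuccLimit κ) {x : Ordi} (hx : x < κ) : ∃ β ∈ I, x < β :=
  let ⟨β, hβI, hβ⟩ := hI.2 _ (isClubIn_Ioo hκ hx); ⟨β, hβI, hβ.1⟩

end Club

def closurePoints (r : Ordi → Ordi → Prop) (κ : Ordi) : Set Ordi :=
  {δ | δ < κ ∧ 0 < δ ∧ ∀ x < δ, ∀ y, r x y → y < δ}

lemma closurePoints_mono {r r' : Ordi → Ordi → Prop} (hrr' : ∀ x y, r x y → r' x y) {κ : Ordi} :
    closurePoints r' κ ⊆ closurePoints r κ :=
  fun _ ⟨hδ, h0, hcl⟩ => ⟨hδ, h0, fun x hx y hxy => hcl x hx y (hrr' x y hxy)⟩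

section Regular

variable {c : Cardinal.{0}} (hc : c.IsRegular)
include hc

lemma sSup_lt_ord {s : Set Ordi} (hs : s ⊆ Iio c.ord) (hcard : #s < lift c) : sSup s < c.ord :=
  Ordinal.sSup_lt_of_lt_cof (by rwa [← lift_cof, hc.cof_ord]) hs

lemma sSup_lt_ord_of_countable (hc₀ : ℵ₀ < c) {s : Set Ordi} (hs : s ⊆ Iio c.ord)
    (hsc : s.Countable) : sSup s < c.ord :=
  sSup_lt_ord hc hs ((le_aleph0_iff_set_countable.2 hsc).trans_lt (by simpa using hc₀))

lemma sSup_image_Iio_lt_ord {f : Ordi → Ordi} {δ : Ordi} (hδ : δ < c.ord)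
    (hf : ∀ x < δ, f x < c.ord) : sSup (f '' Iio δ) < c.ord :=
  sSup_lt_ord hc (by rintro _ ⟨x, hx, rfl⟩; exact hf x hx)
    (mk_image_le.trans_lt (by rw [Cardinal.mk_Iio_ordinal, Cardinal.lift_lt]; exact lt_ord.1 hδ))

section closurePoints

variable (hc₀ : ℵ₀ < c) {r : Ordi → Ordi → Prop} (hcount : ∀ x < c.ord, {y | r x y}.Countable)
  (hlt : ∀ x < c.ord, ∀ y, r x y → y < c.ord)
include hc₀ hcount hlt

lemma exists_closure_step {δ : Ordi} (hδ : δ < c.ord) :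
    ∃ δ' < c.ord, δ < δ' ∧ ∀ x < δ, ∀ y, r x y → y < δ' := by
  set b : Ordi → Ordi := fun x => sSup {y | r x y}
  have hb : ∀ x < c.ord, b x < c.ord := fun x hx =>
    sSup_lt_ord_of_countable hc hc₀ (hlt x hx) (hcount x hx)
  set M := sSup (b '' Iio δ)
  have hM : M < c.ord := sSup_image_Iio_lt_ord hc hδ fun x hx => hb x (hx.trans hδ)
  refine ⟨succ (max δ M), (isSuccLimit_ord hc.aleph0_le).succ_lt (max_lt hδ hM),
    lt_succ_of_le (le_max_left _ _), fun x hx y hxy => lt_succ_of_le (le_max_of_le_right ?_)⟩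
  calc y ≤ b x := le_csSup (bddAbove_Iio.mono (hlt x (hx.trans hδ))) hxy
    _ ≤ M := le_csSup (bddAbove_Iio.mono (by rintro _ ⟨z, hz, rfl⟩; exact hb z (hz.trans hδ)))
        ⟨x, hx, rfl⟩

theorem isClubIn_closurePoints : IsClubIn (closurePoints r c.ord) c.ord := by
  refine ⟨fun δ hδ => hδ.1, fun a ha => ?_, fun δ h0 hδ hlim => ⟨hδ, h0, fun x hx y hxy => ?_⟩⟩
  · choose! F hF using fun δ (hδ : δ < c.ord) => exists_closure_step hc hc₀ hcount hlt hδ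
    set d : ℕ → Ordi := fun n => F^[n] (succ a)
    have hd : ∀ n, d n < c.ord := fun n => by
      induction n with
      | zero => exact (isSuccLimit_ord hc.aleph0_le).succ_lt ha
      | succ n ih => simpa only [d, Function.iterate_succ_apply'] using (hF _ ih).1
    have hle : ∀ n, d n ≤ ⨆ n, d n := le_ciSup (bddAbove_Iio.mono (range_subset_iff.2 hd))
    refine ⟨⨆ n, d n, ⟨?_, ?_, fun x hx y hxy => ?_⟩, (le_succ a).trans (hle 0)⟩
    · exact sSup_lt_ord_of_countable hc hc₀ (range_subset_iff.2 hd) (countable_range d)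
    · exact (bot_le.trans_lt (lt_succ a)).trans_le (hle 0)
    · obtain ⟨n, hn⟩ := exists_lt_of_lt_ciSup hx
      exact ((hF _ (hd n)).2.2 x hn y hxy).trans_le
        (Function.iterate_succ_apply' F n _ ▸ hle (n + 1))
  · obtain ⟨γ, hγ, hxγ, hγδ⟩ := hlim x hx
    exact (hγ.2.2 x hxγ y hxy).trans hγδ

end closurePoints

theorem _root_.IsClubIn.exists_mem_cof_eq {C : Set Ordi} (hC : IsClubIn C c.ord)
    {d : Cardinal.{0}} (hd : d.IsRegular) (hdc : d < c) : ∃ δ ∈ C, δ.cof = d := by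
  -- Padded to an unbounded class of ordinals, `C` is enumerated by `enumOrd` below `c.ord`.
  set s := C ∪ Ici c.ord
  have hs : ¬ BddAbove s := fun ⟨b, hb⟩ => (lt_succ (max b c.ord)).not_ge
    ((hb (Or.inr (mem_Ici.2 ((le_max_right _ _).trans (le_succ _))))).trans (le_max_left _ _))
  have henum : ∀ o < c.ord, enumOrd s o ∈ C := fun o => by
    induction o using WellFoundedLT.induction with
    | _ o IH =>
      intro ho
      have hsub : enumOrd s '' Iio o ⊆ Iio c.ord := by
        rintro _ ⟨b, hb, rfl⟩; exact hC.1 (IH b hb (hb.trans ho))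
      obtain ⟨y, hyC, hy⟩ := hC.exists_gt (isSuccLimit_ord hc.aleph0_le)
        (sSup_image_Iio_lt_ord hc ho fun b hb => hsub (mem_image_of_mem _ hb))
      have hle : enumOrd s o ≤ y := enumOrd_le_of_forall_lt (Or.inl hyC) fun b hb =>
        (le_csSup (bddAbove_Iio.mono hsub) (mem_image_of_mem _ hb)).trans_lt hy
      exact (enumOrd_mem hs o).resolve_right fun hge => (hle.trans_lt (hC.1 hyC)).not_ge hge
  have hd' : d.ord < c.ord := ord_lt_ord.2 hdc
  have hmono : StrictMono (enumOrd s) := enumOrd_strictMono hs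
  have hsub : enumOrd s '' Iio d.ord ⊆ Iio c.ord := by
    rintro _ ⟨b, hb, rfl⟩; exact hC.1 (henum b (hb.trans hd'))
  set δ := sSup (enumOrd s '' Iio d.ord)
  have hdlim := isSuccLimit_ord hd.aleph0_le
  have hlt : ∀ b < d.ord, enumOrd s b < δ := fun b hb => (hmono (lt_succ b)).trans_le
    (le_csSup (bddAbove_Iio.mono hsub) (mem_image_of_mem _ (hdlim.succ_lt hb)))
  have hδ : δ < c.ord := sSup_image_Iio_lt_ord hc hd' fun b hb => hsub (mem_image_of_mem _ hb)
  refine ⟨δ, hC.2.2 δ (bot_le.trans_lt (hlt 0 hdlim.bot_lt)) hδ fun x hx => ?_, ?_⟩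
  · obtain ⟨_, ⟨b, hb, rfl⟩, hxb⟩ :=
      exists_lt_of_lt_csSup (image_nonempty.2 ⟨0, hdlim.bot_lt⟩) hx
    exact ⟨_, henum b (hb.trans hd'), hxb, hlt b hb⟩
  · rw [show δ = _ from congrArg sSup (image_eq_range _ _), ← iSup,
      cof_iSup_Iio (f := fun x => enumOrd s x) (hmono.comp (Subtype.strictMono_coe _))
        hdlim.isSuccPrelimit, hd.cof_ord]

end Regular

theorem isStationaryIn_S21_inter_closurePoints {h : Ordi → Ordi} (hh : ∀ α < w2, h α < w2) :
    IsStationaryIn (S21 ∩ closurePoints (fun x y => y = h x) w2) w2 := by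
  refine ⟨fun β hβ => hβ.1.1, fun C hC => ?_⟩
  obtain ⟨δ, hδ, hcof⟩ := (isClubIn_closurePoints isRegular_aleph_two aleph0_lt_aleph_two
    (r := fun x y => y = nextIn C x ∨ y = h x) (fun x _ => (countable_singleton _).insert _)
    fun x hx y hy => hy.elim (· ▸ hC.nextIn_lt isSuccLimit_w2 hx) (· ▸ hh x hx)).exists_mem_cof_eq
    isRegular_aleph_two isRegular_aleph_one (aleph_lt_aleph.2 one_lt_two)
  exact ⟨δ, ⟨⟨hδ.1, hcof⟩, closurePoints_mono (fun _ _ => Or.inr) hδ⟩,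
    hC.mem_of_forall_nextIn_lt isSuccLimit_w2 hδ.1 hδ.2.1 fun x hx => hδ.2.2 x hx _ (.inl rfl)⟩

theorem countable_of_forall_bounded_countable {S : Set Ordi} (hS : S ⊆ Iio w2) {u : Ordi → Ordi}
    (hu : ∀ α ∈ S, u α < w2) {I : Set Ordi} (hI : ∀ x < w2, ∃ β ∈ I, x < β)
    (h : ∀ β ∈ I, {α ∈ S | α < β ∧ u α < β}.Countable) : S.Countable := by
  by_contra hS'
  obtain ⟨T, hTS, hT⟩ := le_mk_iff_exists_subset.1
    (not_lt.1 (mt lt_aleph_one_iff.1 (mt le_aleph0_iff_set_countable.1 hS')))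
  have hTc : #T < lift.{1} (ℵ_ 2 : Cardinal.{0}) := by
    rw [hT, lift_aleph]; exact aleph_lt_aleph.2 (by simp)
  have huT : u '' T ⊆ Iio w2 := by rintro _ ⟨α, hα, rfl⟩; exact hu α (hTS hα)
  obtain ⟨β, hβ, hβ₀⟩ := hI _ (isSuccLimit_w2.succ_lt (max_lt
    (sSup_lt_ord isRegular_aleph_two (hTS.trans hS) hTc)
    (sSup_lt_ord isRegular_aleph_two huT (mk_image_le.trans_lt hTc))))
  have hsub : T ⊆ {α ∈ S | α < β ∧ u α < β} := fun α hα =>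
    ⟨hTS hα, (le_csSup (bddAbove_Iio.mono (hTS.trans hS)) hα).trans_lt
      ((le_max_left _ _).trans_lt ((lt_succ _).trans hβ₀)),
    (le_csSup (bddAbove_Iio.mono huT) (mem_image_of_mem u hα)).trans_lt
      ((le_max_right _ _).trans_lt ((lt_succ _).trans hβ₀))⟩
  have hTnc : ¬ T.Countable := by
    rw [← le_aleph0_iff_set_countable, hT]; exact aleph0_lt_aleph_one.not_ge
  exact hTnc ((h β hβ).mono hsub)

theorem exists_countable_exceptional {f h : Ordi → Ordi} (hf : InjOn f (Iio w2))
    (hh : InjOn h (Iio w2)) (hhw : ∀ α < w2, h α < w2) {I : Set Ordi}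
    (hI : ∀ x < w2, ∃ β ∈ I, x < β) (G : Ordi → Set Ordi)
    (hG : ∀ β ∈ I, (Iio β \ G β).Countable) (h₁ : ∀ β ∈ I, ∀ α ∈ G β, f α ≠ h α)
    (h₂ : ∀ β ∈ I, ∀ α ∈ G β, ∀ γ ∈ G β, α ≠ γ → f (h α) ≠ h γ) :
    ∃ D : Set Ordi, D ⊆ Iio w2 ∧ D.Countable ∧ (∀ α < w2, α ∉ D → f α ≠ h α) ∧
      (∀ α < w2, α ∉ D → ∀ β < w2, β ∉ D → α ≠ β → f (h α) ≠ h β) := by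
  set B₁ := {α | α < w2 ∧ f α = h α}
  set B₂ := {α | α < w2 ∧ ∃ γ < w2, γ ≠ α ∧ f (h α) = h γ}
  have hB₁ : B₁.Countable := by
    refine countable_of_forall_bounded_countable (fun _ hα => hα.1) (u := id) (fun _ hα => hα.1)
      hI fun β hβ => (hG β hβ).mono ?_
    rintro α ⟨⟨-, hfα⟩, hαβ, -⟩
    exact ⟨hαβ, fun hαG => h₁ β hβ α hαG hfα⟩
  choose! w hw using fun α (hα : α ∈ B₂) => hα.2
  have hwinj : InjOn w B₂ := fun a ha a' ha' he => hh ha.1 ha'.1 <|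
    hf (hhw a ha.1) (hhw a' ha'.1) (by rw [(hw a ha).2.2, (hw a' ha').2.2, he])
  have hB₂ : B₂.Countable := by
    refine countable_of_forall_bounded_countable (fun _ hα => hα.1) (fun α hα => (hw α hα).1) hI
      fun β hβ => ?_
    have hw' : {α ∈ B₂ | w α ∈ Iio β \ G β}.Countable :=
      MapsTo.countable_of_injOn (fun _ hα => hα.2) (hwinj.mono fun _ hα => hα.1) (hG β hβ)
    refine ((hG β hβ).union hw').mono fun α ⟨hαB, hαβ, hwβ⟩ => ?_
    by_contra hn
    simp only [mem_union, mem_sdiff, mem_Iio, mem_ofPred_eq, not_or, not_and, not_not] at hn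
    exact h₂ β hβ α (hn.1 hαβ) (w α) (hn.2 hαB hwβ) (hw α hαB).2.1.symm (hw α hαB).2.2
  exact ⟨B₁ ∪ B₂, fun α hα => hα.elim (·.1) (·.1), hB₁.union hB₂,
    fun α hα hD hfα => hD (.inl ⟨hα, hfα⟩),
    fun α hα hD γ hγ _ hne hfα => hD (.inr ⟨hα, γ, hγ, hne.symm, hfα⟩)⟩

theorem exists_biUnique_cover {α β : Type*} (r : α → β → Prop)
    (h₁ : ∀ a, {b | r a b}.Countable) (h₂ : ∀ b, {a | r a b}.Countable) :
    ∃ M : ℕ × ℕ → α → β → Prop, (∀ k, Relator.BiUnique (M k)) ∧ ∀ a b, r a b ↔ ∃ k, M k a b := by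
  choose e₁ he₁ using fun a => countable_iff_exists_injOn.1 (h₁ a)
  choose e₂ he₂ using fun b => countable_iff_exists_injOn.1 (h₂ b)
  refine ⟨fun k a b => r a b ∧ e₁ a b = k.1 ∧ e₂ b a = k.2, fun k => ⟨?_, ?_⟩,
    fun a b => ⟨fun h => ⟨(e₁ a b, e₂ b a), h, rfl, rfl⟩, fun ⟨_, h, _⟩ => h⟩⟩
  · rintro a a' b ⟨h, -, h2⟩ ⟨h', -, h2'⟩
    exact he₂ b h h' (h2.trans h2'.symm)
  · rintro a b b' ⟨h, h1, -⟩ ⟨h', h1', -⟩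
    exact he₁ a h h' (h1.trans h1'.symm)

lemma biUnique_comap {m : Ordi → Ordi → Prop} (hm : Relator.BiUnique m) {p : Ordi → Ordi}
    {β : Ordi} (hp : InjOn p (Iio β)) :
    Relator.BiUnique fun a b => a < β ∧ b < β ∧ m (p a) (p b) :=
  ⟨fun _ _ _ ⟨ha, _, h⟩ ⟨ha', _, h'⟩ => hp ha ha' (hm.1 h h'),
    fun _ _ _ ⟨_, hb, h⟩ ⟨_, hb', h'⟩ => hp hb hb' (hm.2 h h')⟩

open Classical in
def shiftExtend (m : Ordi → Ordi → Prop) (β α : Ordi) : Ordi :=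
  if h : ∃ y, m α y then h.choose else β + α

section shiftExtend

variable {m : Ordi → Ordi → Prop} {β : Ordi}

lemma shiftExtend_spec {α : Ordi} (h : ∃ y, m α y) : m α (shiftExtend m β α) := by
  rw [shiftExtend, dif_pos h]; exact h.choose_spec

lemma shiftExtend_of_not {α : Ordi} (h : ¬ ∃ y, m α y) : shiftExtend m β α = β + α := by
  rw [shiftExtend, dif_neg h]

lemma shiftExtend_eq (hm : Relator.RightUnique m) {α y : Ordi} (h : m α y) :
    shiftExtend m β α = y :=
  hm (shiftExtend_spec ⟨y, h⟩) h

variable (hβ : ∀ a b, m a b → b < β)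
include hβ

lemma shiftExtend_injective (hm : Relator.BiUnique m) : Function.Injective (shiftExtend m β) := by
  have hlt : ∀ {a a'}, (∃ y, m a y) → ¬ (∃ y, m a' y) →
      shiftExtend m β a ≠ shiftExtend m β a' := by
    intro a a' ha ha' he
    have h := hβ _ _ (shiftExtend_spec (β := β) ha)
    rw [he, shiftExtend_of_not ha'] at h
    exact h.not_ge le_self_add
  intro a a' he
  by_cases ha : ∃ y, m a y <;> by_cases ha' : ∃ y, m a' y
  · exact hm.1 (shiftExtend_spec ha) (he ▸ shiftExtend_spec ha')
  · exact (hlt ha ha' he).elim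
  · exact (hlt ha' ha he.symm).elim
  · rwa [shiftExtend_of_not ha, shiftExtend_of_not ha', add_right_inj] at he

lemma shiftExtend_lt_ord {c : Cardinal.{0}} (hc : ℵ₀ ≤ c) (hβc : β < c.ord) {α : Ordi}
    (hα : α < c.ord) : shiftExtend m β α < c.ord := by
  by_cases h : ∃ y, m α y
  · exact (hβ _ _ (shiftExtend_spec h)).trans hβc
  · rw [shiftExtend_of_not h]; exact isPrincipal_add_ord hc hβc hα

end shiftExtend

/-- The pairs of countable ordinals violating the inequality `g (min x y) < max x y` of (B). -/
def WithinReach (g : Ordi → Ordi) (x y : Ordi) : Prop :=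
  x < w1 ∧ y < w1 ∧ max x y ≤ g (min x y)

lemma withinReach_comm {g : Ordi → Ordi} {x y : Ordi} :
    WithinReach g x y ↔ WithinReach g y x := by
  simp only [WithinReach, max_comm x, min_comm x]; tauto

lemma lt_of_not_withinReach {g : Ordi → Ordi} {x y : Ordi} (hx : x < w1) (hy : y < w1)
    (h : ¬ WithinReach g x y) : g (min x y) < max x y :=
  not_le.1 fun hle => h ⟨hx, hy, hle⟩

lemma countable_setOf_withinReach {g : Ordi → Ordi} (hg : ∀ x < w1, g x < w1) (x : Ordi) :
    {y | WithinReach g x y}.Countable := by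
  by_cases hx : x < w1
  · refine (countable_Iic (max_lt hx (hg x hx))).mono fun y ⟨_, _, hy⟩ => ?_
    rcases le_total x y with hxy | hxy
    · rw [max_eq_right hxy, min_eq_left hxy] at hy
      exact le_max_of_le_right hy
    · exact le_max_of_le_left hxy
  · exact countable_empty.mono fun y hy => (hx hy.1).elim

theorem exists_avoider_of_statementSS (hss : StatementSS) {pi : Ordi → Ordi → Ordi}
    (hpi : ∀ β, w1 ≤ β → β < w2 → BijOn (pi β) (Iio β) (Iio w1)) {G : Set (Ordi → Ordi)}
    (hG : ∀ g ∈ G, ∀ x < w1, g x < w1) (hGcard : #G ≤ ℵ_ 2) :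
    ∃ h : Ordi → Ordi, InjOn h (Iio w2) ∧ (∀ α < w2, h α < w2) ∧
      ∀ g ∈ G, ∀ β, w1 ≤ β → β < w2 → ∃ D : Set Ordi, D.Countable ∧
        (∀ α < β, α ∉ D → h α < β → ¬ WithinReach g (pi β α) (pi β (h α))) ∧
        (∀ α < β, α ∉ D → ∀ γ < β, γ ∉ D → α ≠ γ → h α < β → h γ < β →
          ¬ WithinReach g (pi β (h α)) (pi β (h γ))) := by
  choose! M hM using fun g (hg : g ∈ G) => exists_biUnique_cover (WithinReach g)
    (countable_setOf_withinReach (hG g hg))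
    fun y => by simpa only [withinReach_comm] using countable_setOf_withinReach (hG g hg) y
  set pull : (Ordi → Ordi) → Ordi → ℕ × ℕ → Ordi → Ordi → Prop :=
    fun g β k a b => a < β ∧ b < β ∧ M g k (pi β a) (pi β b)
  have hpull : ∀ g ∈ G, ∀ β, w1 ≤ β → β < w2 → ∀ k, Relator.BiUnique (pull g β k) :=
    fun g hg β hβ1 hβ2 k => biUnique_comap ((hM g hg).1 k) (hpi β hβ1 hβ2).injOn
  set Φ := range fun t : G × Ico w1 w2 × (ℕ × ℕ) => shiftExtend (pull t.1 t.2.1 t.2.2) t.2.1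
  have hΦ : ∀ f ∈ Φ, InjOn f (Iio w2) ∧ ∀ α < w2, f α < w2 := by
    rintro _ ⟨⟨⟨g, hg⟩, ⟨β, hβ1, hβ2⟩, k⟩, rfl⟩
    exact ⟨(shiftExtend_injective (fun _ _ hab => hab.2.1) (hpull g hg β hβ1 hβ2 k)).injOn,
      fun α hα => shiftExtend_lt_ord (fun _ _ hab => hab.2.1) (aleph0_le_aleph 2) hβ2 hα⟩
  have hΦcard : #Φ ≤ ℵ_ 2 := by
    refine mk_range_le.trans ?_
    simp only [mk_prod, Cardinal.lift_id, Cardinal.lift_uzero]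
    exact mul_le_aleph_two hGcard (mul_le_aleph_two mk_Ico_w1_w2_le (by simp))
  obtain ⟨h, hinj, hmaps, hav⟩ := hss Φ hΦ hΦcard
  choose! D hD using hav
  refine ⟨h, hinj, hmaps, fun g hg β hβ1 hβ2 => ?_⟩
  set Dβ := ⋃ k, D (shiftExtend (pull g β k) β)
  have hmem : ∀ k, shiftExtend (pull g β k) β ∈ Φ := fun k =>
    ⟨⟨⟨g, hg⟩, ⟨β, hβ1, hβ2⟩, k⟩, rfl⟩
  have hcatch : ∀ {a b}, a < β → b < β → WithinReach g (pi β a) (pi β b) →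
      ∃ k, shiftExtend (pull g β k) β a = b := fun ha hb hab =>
    let ⟨k, hk⟩ := ((hM g hg).2 _ _).1 hab
    ⟨k, shiftExtend_eq (hpull g hg β hβ1 hβ2 k).2 ⟨ha, hb, hk⟩⟩
  have hnot : ∀ {α} k, α ∉ Dβ → α ∉ D (shiftExtend (pull g β k) β) :=
    fun k hα hk => hα (mem_iUnion.2 ⟨k, hk⟩)
  refine ⟨Dβ, countable_iUnion fun k => (hD _ (hmem k)).2.1,
    fun α hα hαD hhα hR => ?_, fun α hα hαD γ hγ hγD hne hhα hhγ hR => ?_⟩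
  · obtain ⟨k, hk⟩ := hcatch hα hhα hR
    exact (hD _ (hmem k)).2.2.1 α (hα.trans hβ2) (hnot k hαD) hk
  · obtain ⟨k, hk⟩ := hcatch hhα hhγ hR
    exact (hD _ (hmem k)).2.2.2 α (hα.trans hβ2) (hnot k hαD) γ (hγ.trans hβ2) (hnot k hγD)
      hne hk

theorem statementB_of_statementSS (hss : StatementSS) : StatementB := by
  refine ⟨collapse, fun β => collapse_bijOn, fun g hg => ?_⟩
  obtain ⟨h, hinj, hmaps, hav⟩ := exists_avoider_of_statementSS hss (fun β => collapse_bijOn)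
    (G := {g}) (by simpa using hg) (by simpa using one_le_aleph0.trans (aleph0_le_aleph 2))
  have hclosed : ∀ β ∈ closurePoints (fun x y => y = h x) w2, ∀ α < β, h α < β :=
    fun β hβ α hα => hβ.2.2 α hα _ rfl
  refine ⟨h, hinj, hmaps, _, inter_subset_left, isStationaryIn_S21_inter_closurePoints hmaps,
    fun β hβ => hclosed β hβ.2, fun β hβ => ?_⟩
  have hβ1 := w1_le_of_mem_S21 hβ.1
  have hp := (collapse_bijOn hβ1 hβ.1.1).mapsTo
  obtain ⟨D, hD, h₁, h₂⟩ := hav g rfl β hβ1 hβ.1.1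
  have hD' : ∀ {α}, α < β → α ∉ Iio β ∩ D → α ∉ D := fun hα hαD h => hαD ⟨hα, h⟩
  refine ⟨Iio β ∩ D, inter_subset_left, hD.mono inter_subset_right, fun α hα hαD => ?_,
    fun α hα hαD γ hγ hγD hne => ?_⟩
  · have hhα := hclosed β hβ.2 α hα
    exact lt_of_not_withinReach (hp hα) (hp hhα) (h₁ α hα (hD' hα hαD) hhα)
  · have hhα := hclosed β hβ.2 α hα
    have hhγ := hclosed β hβ.2 γ hγ
    exact lt_of_not_withinReach (hp hhα) (hp hhγ)
      (h₂ α hα (hD' hα hαD) γ hγ (hD' hγ hγD) hne hhα hhγ)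

theorem closurePoints_nextIn_diff_subset {R C : Set Ordi} (hR : R ⊆ Iio w1)
    (hRc : ¬ R.Countable) (hC : IsClubIn C w1) {s : Ordi} (hs : s < w1)
    (hsep : ∀ r ∈ R, ∀ r' ∈ R, s < r → r < r' → nextIn C r < r') :
    closurePoints (fun x y => y = nextIn R x) w1 \ C ⊆ Iic s := by
  intro δ ⟨⟨hδ, h0, hcl⟩, hδC⟩
  refine mem_Iic.2 (not_lt.1 fun hsδ => hδC (hC.2.2 δ h0 hδ fun x hx => ?_))
  have hnext : ∀ y < w1, nextIn R y ∈ R ∧ y < nextIn R y := fun y hy =>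
    nextIn_mem (exists_gt_of_not_countable hRc hy)
  set r := nextIn R (max x s)
  obtain ⟨hrR, hxr⟩ := hnext _ (max_lt (hx.trans hδ) hs)
  obtain ⟨hr'R, hrr'⟩ := hnext r (hR hrR)
  obtain ⟨hcC, hrc⟩ := nextIn_mem (hC.exists_gt isSuccLimit_w1 (hR hrR))
  exact ⟨_, hcC, (le_max_left x s).trans_lt (hxr.trans hrc),
    (hsep r hrR _ hr'R ((le_max_right x s).trans_lt hxr) hrr').trans
      (hcl r (hcl _ (max_lt hx hsδ) r rfl) _ rfl)⟩

theorem statementA_of_statementSS (hss : StatementSS) : StatementA := by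
  intro 𝒞 h𝒞 hcard
  obtain ⟨h, hinj, hmaps, hav⟩ := exists_avoider_of_statementSS hss (fun β => collapse_bijOn)
    (G := nextIn '' 𝒞) (by rintro _ ⟨C, hC, rfl⟩ x hx; exact (h𝒞 C hC).nextIn_lt isSuccLimit_w1 hx)
    (mk_image_le.trans hcard)
  obtain ⟨β, hβ, hβ1⟩ := (isClubIn_closurePoints isRegular_aleph_two aleph0_lt_aleph_two
    (r := fun x y => y = h x) (fun x _ => countable_singleton _)
    fun x hx y hy => hy ▸ hmaps x hx).2.1 w1 w1_lt_w2
  have hβ2 : β < w2 := hβ.1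
  have hclosed : ∀ α < β, h α < β := fun α hα => hβ.2.2 α hα _ rfl
  have hp := collapse_bijOn hβ1 hβ2
  set v := collapse β ∘ h
  have hvinj : InjOn v (Iio β) := hp.injOn.comp (hinj.mono (Iio_subset_Iio hβ2.le)) hclosed
  have hR : v '' Iio β ⊆ Iio w1 := by rintro _ ⟨a, ha, rfl⟩; exact hp.mapsTo (hclosed a ha)
  have hRc : ¬ (v '' Iio β).Countable := fun hc =>
    hβ1.not_gt (countable_Iio_iff.1 (MapsTo.countable_of_injOn (mapsTo_image _ _) hvinj hc))
  refine ⟨_, isClubIn_closurePoints isRegular_aleph_one aleph0_lt_aleph_one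
    (fun x _ => countable_singleton _)
    fun x hx y hy => hy ▸ hR (nextIn_mem (exists_gt_of_not_countable hRc hx)).1, fun C hC => ?_⟩
  obtain ⟨D, hD, -, hsep⟩ := hav _ (mem_image_of_mem _ hC) β hβ1 hβ2
  have hJ : v '' (Iio β ∩ D) ⊆ Iio w1 := (image_mono inter_subset_left).trans hR
  have hs := sSup_lt_ord_of_countable isRegular_aleph_one aleph0_lt_aleph_one hJ
    ((hD.mono inter_subset_right).image _)
  have hgood : ∀ a < β, sSup (v '' (Iio β ∩ D)) < v a → a ∉ D := fun a ha hlt haD =>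
    hlt.not_ge (le_csSup (bddAbove_Iio.mono hJ) ⟨a, ⟨ha, haD⟩, rfl⟩)
  refine (countable_Iic hs).mono (closurePoints_nextIn_diff_subset hR hRc (h𝒞 C hC) hs ?_)
  rintro _ ⟨a, ha, rfl⟩ _ ⟨a', ha', rfl⟩ hsa haa'
  have := lt_of_not_withinReach (hR ⟨a, ha, rfl⟩) (hR ⟨a', ha', rfl⟩)
    (hsep a ha (hgood a ha hsa) a' ha' (hgood a' ha' (hsa.trans haa'))
      (by rintro rfl; exact haa'.false) (hclosed a ha) (hclosed a' ha'))
  rwa [min_eq_left haa'.le, max_eq_right haa'.le] at this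

def transportGraph (p f : Ordi → Ordi) (β x y : Ordi) : Prop :=
  ∃ a < β, ∃ b < β, (f a = b ∨ f b = a) ∧ p a = x ∧ p b = y

lemma transportGraph_symm {p f : Ordi → Ordi} {β x y : Ordi} (h : transportGraph p f β x y) :
    transportGraph p f β y x :=
  let ⟨a, ha, b, hb, hab, hx, hy⟩ := h; ⟨b, hb, a, ha, hab.symm, hy, hx⟩

lemma countable_setOf_transportGraph {p f : Ordi → Ordi} {β : Ordi} (hp : InjOn p (Iio β))
    (hf : InjOn f (Iio β)) (x : Ordi) : {y | transportGraph p f β x y}.Countable := by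
  set A := {a | a < β ∧ p a = x}
  have hA : A.Countable :=
    Subsingleton.countable fun _ ha _ ha' => hp ha.1 ha'.1 (ha.2.trans ha'.2.symm)
  have hA' : {b | b < β ∧ f b ∈ A}.Countable :=
    MapsTo.countable_of_injOn (fun _ hb => hb.2) (hf.mono fun _ hb => hb.1) hA
  refine (((hA.image f).union hA').image p).mono ?_
  rintro _ ⟨a, ha, b, hb, hab, rfl, rfl⟩
  exact ⟨b, hab.elim (fun h => .inl ⟨a, ⟨ha, rfl⟩, h⟩) (fun h => .inr ⟨hb, h.symm ▸ ⟨ha, rfl⟩⟩),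
    rfl⟩

theorem isClubIn_closurePoints_transportGraph {p f : Ordi → Ordi} {β : Ordi}
    (hp : BijOn p (Iio β) (Iio w1)) (hf : InjOn f (Iio β)) :
    IsClubIn (closurePoints (transportGraph p f β) w1) w1 :=
  isClubIn_closurePoints isRegular_aleph_one aleph0_lt_aleph_one
    (fun x _ => countable_setOf_transportGraph hp.injOn hf x)
    fun _ _ _ ⟨_, _, _, hb, _, _, hy⟩ => hy ▸ hp.mapsTo hb

theorem exists_club_forall_diff_closurePoints_countable (hA : StatementA)
    {pi : Ordi → Ordi → Ordi} (hpi : ∀ β, w1 ≤ β → β < w2 → BijOn (pi β) (Iio β) (Iio w1))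
    {F : Set (Ordi → Ordi)} (hF : ∀ f ∈ F, InjOn f (Iio w2)) (hcard : #F ≤ ℵ_ 2) :
    ∃ E, IsClubIn E w1 ∧ ∀ f ∈ F, ∀ β, w1 ≤ β → β < w2 →
      (E \ closurePoints (transportGraph (pi β) f β) w1).Countable := by
  obtain ⟨E, hE, hEdiag⟩ := hA
    (range fun t : F × Ico w1 w2 => closurePoints (transportGraph (pi t.2) t.1 t.2) w1)
    (by
      rintro _ ⟨⟨⟨f, hf⟩, ⟨β, hβ1, hβ2⟩⟩, rfl⟩
      exact isClubIn_closurePoints_transportGraph (hpi β hβ1 hβ2)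
        ((hF f hf).mono (Iio_subset_Iio hβ2.le)))
    (mk_range_le.trans (by
      rw [mk_prod, Cardinal.lift_id, Cardinal.lift_id]
      exact mul_le_aleph_two hcard mk_Ico_w1_w2_le))
  exact ⟨E, hE, fun f hf β hβ1 hβ2 => hEdiag _ ⟨(⟨f, hf⟩, ⟨β, hβ1, hβ2⟩), rfl⟩⟩

theorem withinReach_nextIn_of_apply_eq {E : Set Ordi} (hE : IsClubIn E w1) {p f : Ordi → Ordi}
    {β : Ordi} (hp : MapsTo p (Iio β) (Iio w1)) {s : Ordi}
    (hs : ∀ e ∈ E \ closurePoints (transportGraph p f β) w1, e ≤ s) {a b : Ordi} (ha : a < β)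
    (hb : b < β) (hfab : f a = b) (hsa : s < p a) (hsb : s < p b) :
    WithinReach (nextIn E) (p a) (p b) := by
  have hr : transportGraph p f β (min (p a) (p b)) (max (p a) (p b)) := by
    have hab : transportGraph p f β (p a) (p b) := ⟨a, ha, b, hb, .inl hfab, rfl, rfl⟩
    rcases le_total (p a) (p b) with h | h
    · rwa [min_eq_left h, max_eq_right h]
    · rw [min_eq_right h, max_eq_left h]; exact transportGraph_symm hab
  obtain ⟨hnE, hlt⟩ := nextIn_mem (hE.exists_gt isSuccLimit_w1 (min_lt_of_left_lt (hp ha)))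
  have hcl : nextIn E (min (p a) (p b)) ∈ closurePoints (transportGraph p f β) w1 := by
    by_contra hn
    exact (hs _ ⟨hnE, hn⟩).not_gt ((lt_min hsa hsb).trans hlt)
  exact ⟨hp ha, hp hb, (hcl.2.2 _ hlt _ hr).le⟩

lemma countable_Iio_diff_setOf_lt {p h : Ordi → Ordi} {β : Ordi} (hp : InjOn p (Iio β))
    (hh : InjOn h (Iio β)) (hhβ : MapsTo h (Iio β) (Iio β)) {D : Set Ordi} (hD : D.Countable)
    {s : Ordi} (hs : s < w1) :
    (Iio β \ {α | α < β ∧ α ∉ D ∧ s < p α ∧ s < p (h α)}).Countable := by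
  have hsmall : ∀ u : Ordi → Ordi, InjOn u (Iio β) → {α | α < β ∧ u α ≤ s}.Countable :=
    fun u hu => MapsTo.countable_of_injOn (fun _ hα => hα.2) (hu.mono fun _ hα => hα.1)
      (countable_Iic hs)
  refine ((hD.union (hsmall p hp)).union (hsmall (p ∘ h) (hp.comp hh hhβ))).mono ?_
  rintro α ⟨hα, hαG⟩
  by_contra hn
  simp only [mem_union, mem_ofPred_eq, Function.comp_apply, not_or, not_and, not_le] at hn
  exact hαG ⟨hα, hn.1.1, hn.1.2 hα, hn.2 hα⟩

theorem statementSS_of_statementA_of_statementB (hA : StatementA) (hB : StatementB) :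
    StatementSS := by
  obtain ⟨pi, hpi, hBg⟩ := hB
  intro F hF hcard
  obtain ⟨E, hE, hEdiag⟩ :=
    exists_club_forall_diff_closurePoints_countable hA hpi (fun f hf => (hF f hf).1) hcard
  obtain ⟨h, hinj, hmaps, I, hIS, hI, hIcl, hID⟩ :=
    hBg (nextIn E) fun x hx => hE.nextIn_lt isSuccLimit_w1 hx
  refine ⟨h, hinj, hmaps, fun f hf => ?_⟩
  choose! D hD using hID
  have hβ : ∀ β ∈ I, w1 ≤ β ∧ β < w2 := fun β hβ => ⟨w1_le_of_mem_S21 (hIS hβ), (hIS hβ).1⟩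
  set s : Ordi → Ordi := fun β => sSup (E \ closurePoints (transportGraph (pi β) f β) w1)
  have hbdd : ∀ β, BddAbove (E \ closurePoints (transportGraph (pi β) f β) w1) := fun β =>
    bddAbove_Iio.mono (sdiff_subset.trans hE.1)
  have hcapture : ∀ β ∈ I, ∀ a < β, ∀ b < β, f a = b → s β < pi β a → s β < pi β b →
      ¬ nextIn E (min (pi β a) (pi β b)) < max (pi β a) (pi β b) :=
    fun β hβI a ha b hb hfab hsa hsb => not_lt.2
      (withinReach_nextIn_of_apply_eq hE (hpi β (hβ β hβI).1 (hβ β hβI).2).mapsTo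
        (fun _ he => le_csSup (hbdd β) he) ha hb hfab hsa hsb).2.2
  refine exists_countable_exceptional (hF f hf).1 hinj hmaps
    (fun x hx => hI.exists_gt isSuccLimit_w2 hx)
    (fun β => {α | α < β ∧ α ∉ D β ∧ s β < pi β α ∧ s β < pi β (h α)})
    (fun β hβI => countable_Iio_diff_setOf_lt (hpi β (hβ β hβI).1 (hβ β hβI).2).injOn
      (hinj.mono (Iio_subset_Iio (hβ β hβI).2.le)) (hIcl β hβI) (hD β hβI).2.1
      (sSup_lt_ord_of_countable isRegular_aleph_one aleph0_lt_aleph_one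
        (sdiff_subset.trans hE.1) (hEdiag f hf β (hβ β hβI).1 (hβ β hβI).2)))
    (fun β hβI α ⟨hα, hαD, hsα, hshα⟩ hfα => ?_)
    (fun β hβI α ⟨hα, hαD, _, hshα⟩ γ ⟨hγ, hγD, _, hshγ⟩ hne hfαγ => ?_)
  · exact hcapture β hβI α hα (h α) (hIcl β hβI α hα) hfα hsα hshα
      ((hD β hβI).2.2.1 α hα hαD)
  · exact hcapture β hβI (h α) (hIcl β hβI α hα) (h γ) (hIcl β hβI γ hγ) hfαγ hshα hshγ
      ((hD β hβI).2.2.2 α hα hαD γ hγ hγD hne)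

end OmegaTwo

/-- The conjunction of statements (A) and (B) is equivalent to statement (**). -/
theorem statementA_and_B_iff_starstar :
    (StatementA ∧ StatementB) ↔ StatementSS :=
  ⟨fun h => OmegaTwo.statementSS_of_statementA_of_statementB h.1 h.2,
    fun h => ⟨OmegaTwo.statementA_of_statementSS h, OmegaTwo.statementB_of_statementSS h⟩⟩

end
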